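/- The map from synapse data to linking matrices descends to a bijection between equivalence classes of synapse data under double crossing flips and symmetric zero-diagonal integer matrices. -/

import Mathlib

/-- Synapse data of a neuro-link on `l` components: to each unordered pair `{i,j}`
of components, a finite multiset of synapse signs, all signs in `{1,-1}`. -/
def SynData (l : ℕ) :=
  { D : {p : Finset (Fin l) // p.card = 2} → Multiset ℤ //
    ∀ p, ∀ x ∈ D p, x = 1 ∨ x = -1 }

/-- A double crossing flip: insert one positive and one negative synapse between a
single pair of components. -/
def Move {l : ℕ} (D D' : SynData l) : Prop :=
  ∃ p, D'.val p = D.val p + {1, -1} ∧ ∀ q, q ≠ p → D'.val q = D.val q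

/-- The equivalence on synapse data generated by double crossing flips. -/
def synSetoid (l : ℕ) : Setoid (SynData l) :=
  ⟨Relation.EqvGen (@Move l), Relation.EqvGen.is_equivalence _⟩

/-- The linking matrix of synapse data: `lk(D)(i,j)` is the signed sum of the
synapses between components `i` and `j` (zero on the diagonal). -/
def lkMat {l : ℕ} (D : SynData l) : Fin l → Fin l → ℤ :=
  fun i j => if h : i = j then 0 else (D.val ⟨{i, j}, Finset.card_pair h⟩).sum

namespace StmtAux

abbrev Idx (l : ℕ) := {p : Finset (Fin l) // p.card = 2}

def canonM (n : ℤ) : Multiset ℤ :=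
  if 0 ≤ n then Multiset.replicate n.toNat 1 else Multiset.replicate (-n).toNat (-1)

lemma canonM_sum (n : ℤ) : (canonM n).sum = n := by
  unfold canonM; split_ifs with h <;> simp [Multiset.sum_replicate] <;> omega

lemma canonM_signs (n : ℤ) : ∀ x ∈ canonM n, x = 1 ∨ x = -1 := by
  unfold canonM; split_ifs <;> intro x hx <;> simp [Multiset.eq_of_mem_replicate hx]

lemma eq_canonM {m : Multiset ℤ} (hm : ∀ x ∈ m, x = 1 ∨ x = -1)
    (h : ¬(1 ∈ m ∧ -1 ∈ m)) : m = canonM m.sum := by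
  by_cases h1 : (1 : ℤ) ∈ m
  · have hall : ∀ x ∈ m, x = (1 : ℤ) := by
      intro x hx
      rcases hm x hx with h'|h'
      · exact h'
      · exact absurd ⟨h1, h' ▸ hx⟩ h
    have hrep : m = Multiset.replicate m.card 1 := Multiset.eq_replicate_card.mpr hall
    rw [hrep]
    simp [canonM, Multiset.sum_replicate]
  · have hall : ∀ x ∈ m, x = (-1 : ℤ) := by
      intro x hx
      rcases hm x hx with h'|h'
      · exact absurd (h' ▸ hx) h1
      · exact h'
    have hrep : m = Multiset.replicate m.card (-1) := Multiset.eq_replicate_card.mpr hall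
    rcases Nat.eq_zero_or_pos m.card with hc | hc
    · rw [hrep, hc]; simp [canonM]
    · rw [hrep]
      have hsum : (Multiset.replicate m.card (-1 : ℤ)).sum = -(m.card : ℤ) := by
        simp [Multiset.sum_replicate]
      rw [hsum]
      unfold canonM
      rw [if_neg (by omega)]
      congr 1
      omega

def upd {l : ℕ} (D : SynData l) (p : Idx l) (m : Multiset ℤ)
    (hm : ∀ x ∈ m, x = 1 ∨ x = -1) : SynData l :=
  ⟨Function.update D.val p m, by
    intro q x hx
    by_cases hq : q = p
    · subst hq; rw [Function.update_self] at hx; exact hm x hx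
    · rw [Function.update_of_ne hq] at hx; exact D.2 q x hx⟩

lemma move_upd {l : ℕ} (D : SynData l) (p : Idx l) (m₀ : Multiset ℤ)
    (hm₀ : ∀ x ∈ m₀, x = 1 ∨ x = -1) (h : D.val p = m₀ + {1, -1}) :
    Move (upd D p m₀ hm₀) D := by
  refine ⟨p, ?_, ?_⟩
  · rw [show (upd D p m₀ hm₀).val p = m₀ from Function.update_self _ _ _]; exact h
  · intro q hq
    exact (Function.update_of_ne hq _ _).symm

lemma reduce {l : ℕ} : ∀ (n : ℕ) (D D' : SynData l) (p : Idx l),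
    (D.val p).card = n →
    D'.val = Function.update D.val p (canonM (D.val p).sum) →
    Relation.EqvGen Move D D' := by
  intro n
  induction n using Nat.strong_induction_on with
  | _ n ih =>
    intro D D' p hcard hval
    by_cases h : (1 : ℤ) ∈ D.val p ∧ (-1 : ℤ) ∈ D.val p
    · obtain ⟨h1, h2⟩ := h
      set m := D.val p with hm
      set m₀ := (m.erase 1).erase (-1) with hm₀def
      have h2' : (-1 : ℤ) ∈ m.erase 1 := (Multiset.mem_erase_of_ne (by norm_num)).mpr h2
      have hsplit : m = m₀ + {1, -1} := by
        have e1 : (1 : ℤ) ::ₘ m.erase 1 = m := Multiset.cons_erase h1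
        have e2 : (-1 : ℤ) ::ₘ m₀ = m.erase 1 := Multiset.cons_erase h2'
        have : m₀ + ({1, -1} : Multiset ℤ) = 1 ::ₘ -1 ::ₘ m₀ := by
          rw [add_comm]
          simp [Multiset.cons_add]
        rw [this, e2, e1]
      have hm₀signs : ∀ x ∈ m₀, x = 1 ∨ x = -1 := by
        intro x hx
        exact D.2 p x (Multiset.mem_of_mem_erase (Multiset.mem_of_mem_erase hx))
      set Dmid := upd D p m₀ hm₀signs with hDmid
      have hmidp : Dmid.val p = m₀ := Function.update_self _ _ _
      have hcard₀ : m.card = m₀.card + 2 := by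
        rw [hsplit]; simp
      have hstep : Relation.EqvGen Move D Dmid :=
        Relation.EqvGen.symm _ _ (Relation.EqvGen.rel _ _ (move_upd D p m₀ hm₀signs hsplit))
      have hsum : m₀.sum = m.sum := by
        rw [hsplit]; simp
      have hrec : Relation.EqvGen Move Dmid D' := by
        apply ih m₀.card (by omega) Dmid D' p (by rw [hmidp])
        rw [hmidp, hsum, hval, hDmid]
        show Function.update D.val p (canonM m.sum)
          = Function.update (Function.update D.val p m₀) p (canonM m.sum)
        rw [Function.update_idem]
      exact Relation.EqvGen.trans _ _ _ hstep hrec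
    · have hcan : D.val p = canonM (D.val p).sum := eq_canonM (D.2 p) h
      have : D' = D := by
        apply Subtype.ext
        rw [hval, ← hcan, Function.update_eq_self]
      rw [this]
      exact Relation.EqvGen.refl _

def canonD {l : ℕ} (D : SynData l) : SynData l :=
  ⟨fun q => canonM ((D.val q).sum), fun q => canonM_signs _⟩

lemma mix {l : ℕ} (D : SynData l) (s : Finset (Idx l)) :
    ∀ (D' : SynData l),
    (∀ q, D'.val q = if q ∈ s then canonM ((D.val q).sum) else D.val q) →
    Relation.EqvGen Move D D' := by
  induction s using Finset.induction_on with
  | empty =>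
    intro D' h
    have : D' = D := Subtype.ext (funext fun q => by simpa using h q)
    rw [this]; exact Relation.EqvGen.refl _
  | insert p s hp ih =>
    intro D' h
    set mid : SynData l :=
      ⟨fun q => if q ∈ s then canonM ((D.val q).sum) else D.val q, by
        intro q x hx
        dsimp only at hx
        by_cases hq : q ∈ s
        · rw [if_pos hq] at hx; exact canonM_signs _ x hx
        · rw [if_neg hq] at hx; exact D.2 q x hx⟩ with hmiddef
    have h1 : Relation.EqvGen Move D mid := ih mid (fun q => rfl)
    have hmidp : mid.val p = D.val p := by
      show (if p ∈ s then _ else _) = _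
      rw [if_neg hp]
    have h2 : Relation.EqvGen Move mid D' := by
      apply reduce (mid.val p).card mid D' p rfl
      funext q
      by_cases hq : q = p
      · subst hq
        rw [Function.update_self, hmidp, h q, if_pos (Finset.mem_insert_self _ _)]
      · rw [Function.update_of_ne hq, h q]
        show _ = (if q ∈ s then _ else _)
        by_cases hqs : q ∈ s
        · rw [if_pos (Finset.mem_insert_of_mem hqs), if_pos hqs]
        · rw [if_neg (by simp [Finset.mem_insert, hq, hqs]), if_neg hqs]
    exact Relation.EqvGen.trans _ _ _ h1 h2

lemma equiv_canonD {l : ℕ} (D : SynData l) :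
    Relation.EqvGen Move D (canonD D) :=
  mix D Finset.univ (canonD D) (fun q => by simp [canonD])

lemma lk_move {l : ℕ} {D D' : SynData l} (h : Move D D') : lkMat D' = lkMat D := by
  obtain ⟨p, hp, hq⟩ := h
  funext i j
  unfold lkMat
  split_ifs with hij
  · rfl
  · set q : Idx l := ⟨{i, j}, Finset.card_pair hij⟩
    by_cases hq2 : q = p
    · rw [hq2, hp]; simp
    · rw [hq q hq2]

lemma lk_eqv {l : ℕ} {D D' : SynData l} (h : Relation.EqvGen Move D D') :
    lkMat D' = lkMat D := by
  induction h with
  | rel _ _ h => exact lk_move h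
  | refl => rfl
  | symm _ _ _ ih => exact ih.symm
  | trans _ _ _ _ _ ih1 ih2 => exact ih2.trans ih1

lemma lkMat_symm {l : ℕ} (D : SynData l) (i j : Fin l) : lkMat D i j = lkMat D j i := by
  unfold lkMat
  by_cases h : i = j
  · subst h; simp
  · rw [dif_neg h, dif_neg (Ne.symm h)]
    congr 1
    exact congrArg D.val (Subtype.ext (Finset.pair_comm i j))

lemma lkMat_diag {l : ℕ} (D : SynData l) (i : Fin l) : lkMat D i i = 0 := by
  unfold lkMat; simp

lemma sum_eq_of_lk_eq {l : ℕ} {D D' : SynData l} (h : lkMat D = lkMat D') :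
    ∀ q : Idx l, (D.val q).sum = (D'.val q).sum := by
  intro q
  obtain ⟨i, j, hij, hq⟩ := Finset.card_eq_two.mp q.2
  have hq' : q = ⟨{i, j}, Finset.card_pair hij⟩ := Subtype.ext hq
  have := congrFun (congrFun h i) j
  unfold lkMat at this
  rw [dif_neg hij, dif_neg hij] at this
  rw [hq']
  exact this

def ofMat {l : ℕ} (lam : Fin l → Fin l → ℤ) : SynData l :=
  ⟨fun q => canonM (lam (q.1.min' (Finset.card_pos.mp (by rw [q.2]; norm_num)))
      (q.1.max' (Finset.card_pos.mp (by rw [q.2]; norm_num)))),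
    fun q => canonM_signs _⟩

lemma lk_ofMat {l : ℕ} (lam : Fin l → Fin l → ℤ)
    (hsym : ∀ i j, lam i j = lam j i) (hdiag : ∀ i, lam i i = 0) :
    lkMat (ofMat lam) = lam := by
  funext i j
  unfold lkMat
  by_cases hij : i = j
  · rw [dif_pos hij, hij, hdiag]
  · rw [dif_neg hij]
    have key : ∀ (h : ({i, j} : Finset (Fin l)).Nonempty),
        lam (Finset.min' _ h) (Finset.max' _ h) = lam i j := by
      intro h
      have hamem := Finset.min'_mem _ h
      have hbmem := Finset.max'_mem _ h
      have hab : Finset.min' _ h ≠ Finset.max' _ h :=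
        ne_of_lt (Finset.min'_lt_max'_of_card _ (by rw [Finset.card_pair hij]; norm_num))
      simp only [Finset.mem_insert, Finset.mem_singleton] at hamem hbmem
      rcases hamem with ha | ha <;> rcases hbmem with hb | hb
      · exact absurd (ha.trans hb.symm) hab
      · rw [ha, hb]
      · rw [ha, hb, hsym j i]
      · exact absurd (ha.trans hb.symm) hab
    show (canonM _).sum = _
    rw [canonM_sum]
    exact key _

end StmtAux

open StmtAux in
/-- The linking matrix map descends to a bijection between equivalence classes of
synapse data under double crossing flips and symmetric zero-diagonal integer
matrices. -/
theorem stmt_14 (l : ℕ) :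
    ∃ f : Quotient (synSetoid l) →
      {lam : Fin l → Fin l → ℤ // (∀ i j, lam i j = lam j i) ∧ ∀ i, lam i i = 0},
      Function.Bijective f ∧
      ∀ D : SynData l, (f (Quotient.mk (synSetoid l) D)).val = lkMat D := by
  refine ⟨Quotient.lift
      (fun D => ⟨lkMat D, fun i j => lkMat_symm D i j, fun i => lkMat_diag D i⟩)
      (fun a b h => Subtype.ext (lk_eqv h).symm), ⟨?_, ?_⟩, fun D => rfl⟩
  · -- injective
    intro x y
    refine Quotient.inductionOn₂ x y ?_
    intro D D' h
    have hlk : lkMat D = lkMat D' := congrArg Subtype.val h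
    have hcanon : canonD D = canonD D' := by
      apply Subtype.ext
      funext q
      show canonM ((D.val q).sum) = canonM ((D'.val q).sum)
      rw [sum_eq_of_lk_eq hlk q]
    apply Quotient.sound
    exact Relation.EqvGen.trans _ _ _ (equiv_canonD D)
      (hcanon ▸ Relation.EqvGen.symm _ _ (equiv_canonD D'))
  · -- surjective
    rintro ⟨lam, hsym, hdiag⟩
    refine ⟨Quotient.mk _ (ofMat lam), ?_⟩
    exact Subtype.ext (lk_ofMat lam hsym hdiag)
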